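/- arXiv:2308.14735 — 4 statements merged into one kernel-verified Lean document; each statement's English description precedes it below -/
import Mathlib

section
/- Let $x_0, x_1, x_2, x_3$ be nonnegative integers with $x_1 x_2 \leq x_0 x_3$ and odds ratio $OR = \frac{x_0 x_3}{x_1 x_2} > 1$. Let $p(k)$ be the hypergeometric probability that the top-left cell of the $2\times 2$ table with the given margins equals $k$. Then for every $j \geq 1$ with $x_0 + j$ feasible, $p(x_0 + j) < p(x_0) / OR^j$. -/
/-!
Shifting the top-left cell from `x0 + i` to `x0 + i + 1` multiplies the hypergeometric weight by
`(x1 - i)(x2 - i) / ((x0 + i + 1)(x3 + i + 1))`, which is strictly less than `x1 x2 / (x0 x3) = 1 / OR`.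
Each step away from the observed table therefore loses more than a factor `OR`, and `j` steps more
than `OR ^ j`.
-/

/-- Hypergeometric pmf for a 2×2 table with entries `x0 x1` (first row) and
`x2 x3` (second row) and fixed margins: the probability that the top-left
cell equals `k`. -/
noncomputable def hyp2x2 (x0 x1 x2 x3 : ℕ) (k : ℕ) : ℝ :=
  ((x0 + x1).choose k * (x2 + x3).choose (x0 + x2 - k) : ℝ) /
    ((x0 + x1 + x2 + x3).choose (x0 + x2) : ℝ)

theorem lt_div_pow_of_forall_succ_lt_div {f : ℕ → ℝ} {r : ℝ} (hr : 0 < r) {m : ℕ}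
    (hf : ∀ i < m, f (i + 1) < f i / r) {j : ℕ} (hj : 1 ≤ j) (hjm : j ≤ m) :
    f j < f 0 / r ^ j := by
  induction j, hj using Nat.le_induction with
  | base => simpa using hf 0 (by omega)
  | succ n _ ih =>
    calc f (n + 1) < f n / r := hf n (by omega)
      _ < f 0 / r ^ n / r := by gcongr; exact ih (by omega)
      _ = f 0 / r ^ (n + 1) := by rw [div_div, pow_succ]

section

variable {x0 x1 x2 x3 : ℕ}

theorem hyp2x2_pos {k : ℕ} (hk : k ≤ x0 + x1) (hk' : x0 + x2 - k ≤ x2 + x3) :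
    0 < hyp2x2 x0 x1 x2 x3 k := by
  unfold hyp2x2
  have hden : x0 + x2 ≤ x0 + x1 + x2 + x3 := by omega
  positivity [Nat.choose_pos hk, Nat.choose_pos hk', Nat.choose_pos hden]

theorem choose_mul_choose_shift_mul_eq {i : ℕ} (hi : i < x2) :
    (x0 + x1).choose (x0 + i + 1) * (x2 + x3).choose (x2 - (i + 1)) * ((x0 + i + 1) * (x3 + i + 1))
      = (x0 + x1).choose (x0 + i) * (x2 + x3).choose (x2 - i) * ((x1 - i) * (x2 - i)) := by
  have top := Nat.choose_succ_right_eq (x0 + x1) (x0 + i)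
  have bottom := Nat.choose_succ_right_eq (x2 + x3) (x2 - (i + 1))
  rw [show x0 + x1 - (x0 + i) = x1 - i by omega] at top
  rw [show x2 - (i + 1) + 1 = x2 - i by omega,
    show x2 + x3 - (x2 - (i + 1)) = x3 + i + 1 by omega] at bottom
  calc _ = ((x0 + x1).choose (x0 + i + 1) * (x0 + i + 1))
          * ((x2 + x3).choose (x2 - (i + 1)) * (x3 + i + 1)) := by ring
    _ = ((x0 + x1).choose (x0 + i) * (x1 - i)) * ((x2 + x3).choose (x2 - i) * (x2 - i)) := by
        rw [top, bottom]
    _ = _ := by ring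

theorem hyp2x2_succ_mul_eq {i : ℕ} (hi : i < x2) :
    hyp2x2 x0 x1 x2 x3 (x0 + i + 1) * ((x0 + i + 1) * (x3 + i + 1) : ℕ)
      = hyp2x2 x0 x1 x2 x3 (x0 + i) * ((x1 - i) * (x2 - i) : ℕ) := by
  unfold hyp2x2
  rw [show x0 + x2 - (x0 + i + 1) = x2 - (i + 1) by omega, show x0 + x2 - (x0 + i) = x2 - i by omega,
    div_mul_eq_mul_div, div_mul_eq_mul_div]
  congr 1
  exact_mod_cast choose_mul_choose_shift_mul_eq hi

theorem hyp2x2_succ_mul_lt {i : ℕ} (hi1 : i < x1) (hi2 : i < x2) :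
    hyp2x2 x0 x1 x2 x3 (x0 + i + 1) * (x0 * x3 : ℕ)
      < hyp2x2 x0 x1 x2 x3 (x0 + i) * (x1 * x2 : ℕ) := by
  have hpos : 0 < hyp2x2 x0 x1 x2 x3 (x0 + i + 1) := hyp2x2_pos (by omega) (by omega)
  have hnonneg : 0 ≤ hyp2x2 x0 x1 x2 x3 (x0 + i) := (hyp2x2_pos (by omega) (by omega)).le
  have hgrow : x0 * x3 < (x0 + i + 1) * (x3 + i + 1) := by nlinarith
  have hshrink : (x1 - i) * (x2 - i) ≤ x1 * x2 := Nat.mul_le_mul (Nat.sub_le _ _) (Nat.sub_le _ _)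
  calc _ < hyp2x2 x0 x1 x2 x3 (x0 + i + 1) * ((x0 + i + 1) * (x3 + i + 1) : ℕ) := by gcongr
    _ = hyp2x2 x0 x1 x2 x3 (x0 + i) * ((x1 - i) * (x2 - i) : ℕ) := hyp2x2_succ_mul_eq hi2
    _ ≤ _ := by gcongr

theorem hyp2x2_succ_lt_div_oddsRatio {i : ℕ} (hi1 : i < x1) (hi2 : i < x2)
    (hOR : 0 < (x0 * x3 : ℝ) / (x1 * x2 : ℝ)) :
    hyp2x2 x0 x1 x2 x3 (x0 + (i + 1)) <
      hyp2x2 x0 x1 x2 x3 (x0 + i) / ((x0 * x3 : ℝ) / (x1 * x2 : ℝ)) := by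
  have h03 : (0 : ℝ) < x0 * x3 := by
    by_contra! h
    exact hOR.not_ge (div_nonpos_of_nonpos_of_nonneg h (by positivity))
  rw [div_div_eq_mul_div, lt_div_iff₀ h03, ← add_assoc]
  exact_mod_cast hyp2x2_succ_mul_lt (x3 := x3) hi1 hi2

end

theorem hyp2x2_tail_term_lt_general (x0 x1 x2 x3 : ℕ)
    (hOR : 1 < (x0 * x3 : ℝ) / (x1 * x2 : ℝ))
    (j : ℕ) (hj1 : 1 ≤ j) (hjfeas : j ≤ min x1 x2) :
    hyp2x2 x0 x1 x2 x3 (x0 + j) <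
      hyp2x2 x0 x1 x2 x3 x0 / ((x0 * x3 : ℝ) / (x1 * x2 : ℝ)) ^ j :=
  have hpos : 0 < (x0 * x3 : ℝ) / (x1 * x2 : ℝ) := one_pos.trans hOR
  lt_div_pow_of_forall_succ_lt_div (f := fun i ↦ hyp2x2 x0 x1 x2 x3 (x0 + i)) hpos
    (fun _ hi ↦ hyp2x2_succ_lt_div_oddsRatio (by omega) (by omega) hpos) hj1 hjfeas

theorem hyp2x2_tail_term_lt (x0 x1 x2 x3 : ℕ)
    (hle : x1 * x2 ≤ x0 * x3)
    (hOR : 1 < (x0 * x3 : ℝ) / (x1 * x2 : ℝ))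
    (j : ℕ) (hj1 : 1 ≤ j) (hjfeas : j ≤ min x1 x2) :
    hyp2x2 x0 x1 x2 x3 (x0 + j) <
      hyp2x2 x0 x1 x2 x3 x0 / ((x0 * x3 : ℝ) / (x1 * x2 : ℝ)) ^ j :=
  hyp2x2_tail_term_lt_general x0 x1 x2 x3 hOR j hj1 hjfeas
end

section
/- Let $x_0,x_1,x_2,x_3$ be nonnegative integers with odds ratio $OR = \frac{x_0x_3}{x_1x_2} > 1$, and let $p(k)$ be the hypergeometric pmf of the $2\times 2$ table with these margins. Then the one-sided tail sum satisfies $\sum_{j=1}^{x_2} p(x_0 + j) < \frac{p(x_0)}{OR - 1}$. -/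
/-!
Moving the top-left cell from `x0 + j` to `x0 + j + 1` multiplies the pmf by
`(x1 - j) (x2 - j) / ((x0 + j + 1) (x3 + j + 1)) ≤ 1 / OR`, so `p (x0 + j) ≤ p x0 / OR ^ j`,
and the tail is dominated by the geometric series `p x0 · ∑_{j ≥ 1} OR⁻ʲ = p x0 / (OR - 1)`.
The inequality is strict because the finite geometric sum falls short of its limit and `p x0 > 0`.
-/

open Finset

lemma geom_sum_Icc_one_lt {K : Type*} [Field K] [LinearOrder K] [IsStrictOrderedRing K]
    {x : K} (hx0 : 0 < x) (hx1 : x < 1) (n : ℕ) :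
    ∑ i ∈ Icc 1 n, x ^ i < x / (1 - x) := by
  rw [lt_div_iff₀ (sub_pos.2 hx1), ← Ico_add_one_right_eq_Icc,
    geom_sum_Ico_mul_neg x (by omega), pow_one]
  exact sub_lt_self _ (pow_pos hx0 _)

lemma sum_Icc_one_lt_div_sub_one {f : ℕ → ℝ} {q : ℝ} {n : ℕ} (hq : 1 < q) (hf0 : 0 < f 0)
    (hf : ∀ k < n, f (k + 1) * q ≤ f k) :
    ∑ j ∈ Icc 1 n, f j < f 0 / (q - 1) := by
  have hq0 : 0 < q := one_pos.trans hq
  have hdecay : ∀ j ≤ n, f j ≤ q⁻¹ ^ j * f 0 := fun j hj =>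
    le_geom (inv_nonneg.2 hq0.le) j fun k hk => by
      rw [inv_mul_eq_div, le_div_iff₀ hq0]
      exact hf k (by omega)
  calc ∑ j ∈ Icc 1 n, f j ≤ ∑ j ∈ Icc 1 n, q⁻¹ ^ j * f 0 :=
        sum_le_sum fun j hj => hdecay j (mem_Icc.1 hj).2
    _ = (∑ j ∈ Icc 1 n, q⁻¹ ^ j) * f 0 := (sum_mul ..).symm
    _ < q⁻¹ / (1 - q⁻¹) * f 0 :=
        mul_lt_mul_of_pos_right
          (geom_sum_Icc_one_lt (inv_pos.2 hq0) (inv_lt_one_of_one_lt₀ hq) n) hf0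
    _ = f 0 / (q - 1) := by
        field_simp [(sub_pos.2 hq).ne']

lemma choose_add_add_one_mul_le (a b j : ℕ) :
    (a + b).choose (a + j + 1) * a ≤ (a + b).choose (a + j) * b :=
  calc (a + b).choose (a + j + 1) * a ≤ (a + b).choose (a + j + 1) * (a + j + 1) :=
        Nat.mul_le_mul_left _ (by omega)
    _ = (a + b).choose (a + j) * (b - j) := by
        rw [Nat.choose_succ_right_eq, Nat.add_sub_add_left]
    _ ≤ (a + b).choose (a + j) * b := Nat.mul_le_mul_left _ (Nat.sub_le _ _)

lemma hyp2x2_succ_mul_le (x0 x1 x2 x3 j : ℕ) (hj : j < x2) :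
    hyp2x2 x0 x1 x2 x3 (x0 + (j + 1)) * (x0 * x3 : ℝ) ≤
      hyp2x2 x0 x1 x2 x3 (x0 + j) * (x1 * x2 : ℝ) := by
  have hrow : (x0 + x1).choose (x0 + (j + 1)) * x0 ≤ (x0 + x1).choose (x0 + j) * x1 :=
    choose_add_add_one_mul_le x0 x1 j
  have hcol : (x2 + x3).choose (x0 + x2 - (x0 + (j + 1))) * x3 ≤
      (x2 + x3).choose (x0 + x2 - (x0 + j)) * x2 := by
    -- by `choose n k = choose n (n - k)` this is `hrow` with `(x3, x2)` in place of `(x0, x1)`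
    rw [Nat.choose_symm_of_eq_add
        (show x2 + x3 = x0 + x2 - (x0 + (j + 1)) + (x3 + j + 1) by omega),
      Nat.choose_symm_of_eq_add (show x2 + x3 = x0 + x2 - (x0 + j) + (x3 + j) by omega),
      add_comm x2 x3]
    exact choose_add_add_one_mul_le x3 x2 j
  have key : (x0 + x1).choose (x0 + (j + 1)) * (x2 + x3).choose (x0 + x2 - (x0 + (j + 1))) *
        (x0 * x3) ≤
      (x0 + x1).choose (x0 + j) * (x2 + x3).choose (x0 + x2 - (x0 + j)) * (x1 * x2) := by
    calc _ = ((x0 + x1).choose (x0 + (j + 1)) * x0) *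
          ((x2 + x3).choose (x0 + x2 - (x0 + (j + 1))) * x3) := by ring
      _ ≤ ((x0 + x1).choose (x0 + j) * x1) * ((x2 + x3).choose (x0 + x2 - (x0 + j)) * x2) :=
          Nat.mul_le_mul hrow hcol
      _ = _ := by ring
  unfold hyp2x2
  rw [div_mul_eq_mul_div, div_mul_eq_mul_div]
  exact div_le_div_of_nonneg_right (by exact_mod_cast key) (Nat.cast_nonneg _)

lemma hyp2x2_self_pos (x0 x1 x2 x3 : ℕ) : 0 < hyp2x2 x0 x1 x2 x3 x0 := by
  unfold hyp2x2
  rw [Nat.add_sub_cancel_left]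
  have h1 := Nat.choose_pos (Nat.le_add_right x0 x1)
  have h2 := Nat.choose_pos (Nat.le_add_right x2 x3)
  have h3 := Nat.choose_pos (show x0 + x2 ≤ x0 + x1 + x2 + x3 by omega)
  positivity

theorem hyp2x2_tail_sum_lt_general (x0 x1 x2 x3 : ℕ)
    (hOR : 1 < (x0 * x3 : ℝ) / (x1 * x2 : ℝ)) :
    ∑ j ∈ Finset.Icc 1 x2, hyp2x2 x0 x1 x2 x3 (x0 + j) <
      hyp2x2 x0 x1 x2 x3 x0 / ((x0 * x3 : ℝ) / (x1 * x2 : ℝ) - 1) := by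
  have hx12 : (0 : ℝ) < x1 * x2 := by
    by_contra! h
    norm_num [le_antisymm h (by positivity)] at hOR
  refine sum_Icc_one_lt_div_sub_one (f := fun j => hyp2x2 x0 x1 x2 x3 (x0 + j)) hOR
    (hyp2x2_self_pos x0 x1 x2 x3) fun k hk => ?_
  rw [mul_div_assoc', div_le_iff₀ hx12]
  exact hyp2x2_succ_mul_le x0 x1 x2 x3 k hk

theorem hyp2x2_tail_sum_lt (x0 x1 x2 x3 : ℕ)
    (h21 : x2 ≤ x1) (h03 : x0 ≤ x3)
    (hOR : 1 < (x0 * x3 : ℝ) / (x1 * x2 : ℝ)) :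
    ∑ j ∈ Finset.Icc 1 x2, hyp2x2 x0 x1 x2 x3 (x0 + j) <
      hyp2x2 x0 x1 x2 x3 x0 / ((x0 * x3 : ℝ) / (x1 * x2 : ℝ) - 1) :=
  hyp2x2_tail_sum_lt_general x0 x1 x2 x3 hOR
end

section
/- Let $N$ be a positive integer and let $x_0, x_1, x_2, x_3$ be positive integers summing to $N$, with relative frequencies $X_k = x_k / N$. Define $MI$ as the mutual information of the $2\times 2$ table with cells $X_k$, and $P_H = \frac{(x_0+x_1)!(x_2+x_3)!(x_0+x_2)!(x_1+x_3)!}{N!\,x_0!x_1!x_2!x_3!}$. Then $-\log P_H - N \cdot MI < \frac{1}{2}\log(N+1) + 5.253$. -/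
/-- Mutual information of a 2×2 contingency table with cell probabilities
`X0 X1 X2 X3`, with the convention `0 * log 0 = 0`. -/
noncomputable def mi2x2 (X0 X1 X2 X3 : ℝ) : ℝ :=
  (X0 * Real.log X0 + X1 * Real.log X1 + X2 * Real.log X2 + X3 * Real.log X3)
    - (X0 + X1) * Real.log (X0 + X1) - (X2 + X3) * Real.log (X2 + X3)
    - (X0 + X2) * Real.log (X0 + X2) - (X1 + X3) * Real.log (X1 + X3)

/-- Hypergeometric probability of the observed 2×2 table with cell counts
`x0 x1 x2 x3` and total `N = x0 + x1 + x2 + x3`. -/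
noncomputable def hypProb (x0 x1 x2 x3 : ℕ) : ℝ :=
  ((x0 + x1).factorial * (x2 + x3).factorial * (x0 + x2).factorial *
      (x1 + x3).factorial : ℝ) /
    ((x0 + x1 + x2 + x3).factorial * x0.factorial * x1.factorial * x2.factorial *
      x3.factorial : ℝ)


/-!
Write `log n! = n log n - n + g n` (`g = stirlingGap`). Multiplying out `N · MI` cancels all
the `n log n` terms of `-log P_H`, and the linear terms cancel because the total and the four
cells, like the four margins, add up to `2N`; so the quantity is `g N + Σ g xₖ - Σ g (margins)`.
Stirling gives `log n / 2 ≤ g n ≤ log n / 2 + 1`, and `(a + b)² ≥ 4ab` for each margin bounds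
the leftover logarithms, giving at most `log N / 2 + 5 - log 4`.
-/

open Real Stirling
open scoped Nat

lemma log_factorial_le_stirling {n : ℕ} (hn : n ≠ 0) :
    log n ! ≤ n * log n - n + log n / 2 + 1 := by
  obtain ⟨m, rfl⟩ := Nat.exists_eq_succ_of_ne_zero hn
  have hseq : log (stirlingSeq (m + 1)) ≤ 1 - log 2 / 2 := by
    have := log_stirlingSeq'_antitone (Nat.zero_le m)
    simpa [stirlingSeq_one, log_div, log_sqrt] using this
  have hformula := log_stirlingSeq_formula (m + 1)
  rw [log_div (by positivity) (exp_ne_zero 1), log_exp, log_mul two_ne_zero (by positivity)]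
    at hformula
  push_cast at hformula ⊢
  linarith

noncomputable def stirlingGap (n : ℕ) : ℝ := log n ! - (n * log n - n)

lemma log_div_two_le_stirlingGap {n : ℕ} (hn : n ≠ 0) : log n / 2 ≤ stirlingGap n := by
  have h2π : 0 ≤ log (2 * π) := log_nonneg (by linarith [pi_gt_three])
  rw [stirlingGap]
  linarith [le_log_factorial_stirling hn]

lemma stirlingGap_le {n : ℕ} (hn : n ≠ 0) : stirlingGap n ≤ log n / 2 + 1 := by
  rw [stirlingGap]
  linarith [log_factorial_le_stirling hn]

lemma mul_div_mul_log_div (x : ℝ) {s : ℝ} (hs : s ≠ 0) :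
    s * (x / s * log (x / s)) = x * log x - x * log s := by
  obtain rfl | hx := eq_or_ne x 0
  · simp
  rw [log_div hx hs]
  field_simp

lemma mul_mi2x2_div (a b c d : ℝ) (hs : a + b + c + d ≠ 0) :
    (a + b + c + d) * mi2x2 (a / (a + b + c + d)) (b / (a + b + c + d))
        (c / (a + b + c + d)) (d / (a + b + c + d)) =
      a * log a + b * log b + c * log c + d * log d
        - ((a + b) * log (a + b) + (c + d) * log (c + d)
          + (a + c) * log (a + c) + (b + d) * log (b + d))
        + (a + b + c + d) * log (a + b + c + d) := by
  have h := fun x ↦ mul_div_mul_log_div x hs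
  simp only [mi2x2, ← add_div]
  linear_combination h a + h b + h c + h d - h (a + b) - h (c + d) - h (a + c) - h (b + d)

lemma log_hypProb (x0 x1 x2 x3 : ℕ) :
    log (hypProb x0 x1 x2 x3) =
      log (x0 + x1)! + log (x2 + x3)! + log (x0 + x2)! + log (x1 + x3)!
        - (log (x0 + x1 + x2 + x3)! + log x0 ! + log x1 ! + log x2 ! + log x3 !) := by
  rw [hypProb, log_div (by positivity) (by positivity)]
  simp only [log_mul, mul_ne_zero_iff, Nat.cast_ne_zero, Nat.factorial_ne_zero, ne_eq,
    not_false_eq_true, and_self]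

lemma neg_log_hypProb_sub_mul_mi2x2 {N x0 x1 x2 x3 : ℕ} (hsum : x0 + x1 + x2 + x3 = N) :
    -log (hypProb x0 x1 x2 x3) - N * mi2x2 (x0 / N) (x1 / N) (x2 / N) (x3 / N) =
      stirlingGap N + (stirlingGap x0 + stirlingGap x1 + stirlingGap x2 + stirlingGap x3)
        - (stirlingGap (x0 + x1) + stirlingGap (x2 + x3)
          + stirlingGap (x0 + x2) + stirlingGap (x1 + x3)) := by
  subst hsum
  obtain hN | hN := eq_or_ne (x0 + x1 + x2 + x3) 0
  · obtain ⟨rfl, rfl, rfl, rfl⟩ : x0 = 0 ∧ x1 = 0 ∧ x2 = 0 ∧ x3 = 0 := by omega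
    simp [hypProb, stirlingGap]
  have hmi := mul_mi2x2_div (x0 : ℝ) x1 x2 x3 (by exact_mod_cast hN)
  rw [log_hypProb]
  simp only [stirlingGap]
  push_cast at hmi ⊢
  linarith

lemma log_four_add_log_add_log_le {a b : ℝ} (ha : 0 < a) (hb : 0 < b) :
    log 4 + log a + log b ≤ 2 * log (a + b) :=
  calc log 4 + log a + log b = log (4 * a * b) := by
        rw [log_mul (by positivity) hb.ne', log_mul (by norm_num) ha.ne']
    _ ≤ log ((a + b) ^ 2) := log_le_log (by positivity) (by nlinarith [sq_nonneg (a - b)])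
    _ = 2 * log (a + b) := by simp [log_pow]

theorem neg_log_hyp_sub_N_mi_upper (N : ℕ) (x0 x1 x2 x3 : ℕ)
    (h0 : 0 < x0) (h1 : 0 < x1) (h2 : 0 < x2) (h3 : 0 < x3)
    (hsum : x0 + x1 + x2 + x3 = N) :
    -Real.log (hypProb x0 x1 x2 x3) -
        (N : ℝ) * mi2x2 ((x0 : ℝ) / N) ((x1 : ℝ) / N) ((x2 : ℝ) / N) ((x3 : ℝ) / N) <
      (1 / 2) * Real.log (N + 1) + 5.253 := by
  have hpos {x : ℕ} (hx : 0 < x) : (0 : ℝ) < x := Nat.cast_pos.mpr hx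
  rw [neg_log_hypProb_sub_mul_mi2x2 hsum]
  calc _ ≤ (log N / 2 + 1)
          + ((log x0 / 2 + 1) + (log x1 / 2 + 1) + (log x2 / 2 + 1) + (log x3 / 2 + 1))
          - (log ↑(x0 + x1) / 2 + log ↑(x2 + x3) / 2
            + log ↑(x0 + x2) / 2 + log ↑(x1 + x3) / 2) := by
        gcongr
        all_goals first
          | exact stirlingGap_le (by omega)
          | exact log_div_two_le_stirlingGap (by omega)
    _ ≤ log N / 2 + 5 - log 4 := by
        push_cast
        linarith [log_four_add_log_add_log_le (hpos h0) (hpos h1),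
          log_four_add_log_add_log_le (hpos h2) (hpos h3),
          log_four_add_log_add_log_le (hpos h0) (hpos h2),
          log_four_add_log_add_log_le (hpos h1) (hpos h3)]
    _ < 1 / 2 * log (N + 1) + 5.253 := by
        have hlogN : log N ≤ log (N + 1) := log_le_log (hpos (by omega)) (by linarith)
        have hlog4 : 0 < log 4 := log_pos (by norm_num)
        linarith
end

section
/- Let $(x^{(N)}_k)$ be a sequence of positive $2\times 2$ integer tables with total $N$, relative frequencies converging to positive probabilities $X_k$ with $X_1 X_2 < X_0 X_3$ (so the limiting odds ratio $OR > 1$). Then $-\frac{1}{N}\log P_F^{(N)} \to MI$ as $N \to \infty$, where $P_F^{(N)}$ is Fisher's exact test $p$-value and $MI$ is the mutual information of the limiting distribution. -/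
open Filter

/-- Fisher's exact test p-value: the sum of the probabilities of all tables with
the same margins (parametrized by the top-left cell `k`) whose probability is at
most that of the observed table. -/
noncomputable def fisher2x2 (x0 x1 x2 x3 : ℕ) : ℝ :=
  ∑ k ∈ Finset.range (x0 + x1 + x2 + x3 + 1),
    if hyp2x2 x0 x1 x2 x3 k ≤ hyp2x2 x0 x1 x2 x3 x0 then hyp2x2 x0 x1 x2 x3 k else 0

/-!
Writing `P_H` for the hypergeometric probability of the observed table, every table counted in
Fisher's p-value has probability at most `P_H`, so `P_H ≤ P_F ≤ (n + 1) P_H` with `n ~ N` the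
table total, and the polynomial factor disappears after taking `log` and dividing by `N`.
Stirling's formula gives `log n! = n log n - n + o(n)`; as `log P_H` is a signed sum of nine
log-factorials of margins and cells, `-(1/N) log P_H` tends to `∑ Xᵢ log Xᵢ` minus the same
expression for the margins, which is the mutual information.
-/

open Topology
open scoped Nat

theorem tendsto_log_div_natCast_of_tendsto_div {y : ℕ → ℝ} {Y : ℝ} (hY : 0 < Y)
    (hy : Tendsto (fun N => y N / N) atTop (𝓝 Y)) :
    Tendsto (fun N : ℕ => Real.log (y N) / N) atTop (𝓝 0) := by
  have hlogN : Tendsto (fun N : ℕ => Real.log N / N) atTop (𝓝 0) := by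
    simpa [Function.comp_def] using
      (Real.tendsto_pow_log_div_mul_add_atTop 1 0 1 one_ne_zero).comp tendsto_natCast_atTop_atTop
  have hlim := (((Real.continuousAt_log hY.ne').tendsto.comp hy).mul
    tendsto_one_div_atTop_nhds_zero_nat).add hlogN
  rw [mul_zero, zero_add] at hlim
  refine hlim.congr' ?_
  filter_upwards [hy.eventually (eventually_gt_nhds hY), eventually_gt_atTop 0] with N hyN hN
  have hN' : (0 : ℝ) < N := Nat.cast_pos.mpr hN
  have hyN' : 0 < y N := (div_pos_iff_of_pos_right hN').mp hyN
  simp only [Function.comp_apply]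
  rw [Real.log_div hyN'.ne' hN'.ne']
  ring

theorem tendsto_log_factorial_sub_div_self :
    Tendsto (fun n : ℕ => (Real.log n ! - (n * Real.log n - n)) / n) atTop (𝓝 0) := by
  have hseq : Tendsto (fun n : ℕ => Real.log (Stirling.stirlingSeq n) * (1 / n)) atTop (𝓝 0) := by
    simpa using ((Real.continuousAt_log (by positivity)).tendsto.comp
      Stirling.tendsto_stirlingSeq_sqrt_pi).mul tendsto_one_div_atTop_nhds_zero_nat
  have hsqrt : Tendsto (fun n : ℕ => Real.log (2 * n) / n) atTop (𝓝 0) := by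
    refine tendsto_log_div_natCast_of_tendsto_div two_pos (tendsto_const_nhds.congr' ?_)
    filter_upwards [eventually_ne_atTop 0] with n hn
    field_simp
  have hlim := hseq.add (hsqrt.const_mul (1 / 2))
  rw [mul_zero, add_zero] at hlim
  refine hlim.congr' ?_
  filter_upwards [eventually_ne_atTop 0] with n hn
  rw [Stirling.log_stirlingSeq_formula, Real.log_div (by positivity) (Real.exp_ne_zero 1),
    Real.log_exp]
  field_simp
  ring

theorem tendsto_log_factorial_div_sub {c : ℕ → ℕ} {C : ℝ} (hC : 0 < C)
    (hc : Tendsto (fun N => (c N : ℝ) / N) atTop (𝓝 C)) :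
    Tendsto (fun N => Real.log (c N)! / N - (c N : ℝ) / N * Real.log N)
      atTop (𝓝 (C * Real.log C - C)) := by
  have hc_atTop : Tendsto c atTop atTop := by
    refine tendsto_natCast_atTop_iff.mp
      ((hc.pos_mul_atTop hC tendsto_natCast_atTop_atTop).congr' ?_)
    filter_upwards [eventually_ne_atTop 0] with N hN
    field_simp
  have hlim := ((tendsto_log_factorial_sub_div_self.comp hc_atTop).mul hc).add
    ((hc.mul ((Real.continuousAt_log hC.ne').tendsto.comp hc)).sub hc)
  rw [zero_mul, zero_add] at hlim
  refine hlim.congr' ?_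
  filter_upwards [hc_atTop.eventually_ne_atTop 0, eventually_ne_atTop 0] with N hcN hN
  simp only [Function.comp_apply]
  rw [Real.log_div (by positivity) (by positivity)]
  field_simp
  ring

theorem tendsto_natCast_add_div {u v : ℕ → ℕ} {U V : ℝ}
    (hu : Tendsto (fun N => (u N : ℝ) / N) atTop (𝓝 U))
    (hv : Tendsto (fun N => (v N : ℝ) / N) atTop (𝓝 V)) :
    Tendsto (fun N => ((u N + v N : ℕ) : ℝ) / N) atTop (𝓝 (U + V)) := by
  simpa only [Nat.cast_add, add_div] using hu.add hv

theorem tendsto_neg_inv_mul_log_of_le_of_le_mul {p f g : ℕ → ℝ} {L : ℝ}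
    (hp : ∀ N, 0 < p N) (hpf : ∀ N, p N ≤ f N) (hfg : ∀ N, f N ≤ g N * p N)
    (hg : Tendsto (fun N : ℕ => Real.log (g N) / N) atTop (𝓝 0))
    (hlim : Tendsto (fun N : ℕ => -(1 / (N : ℝ)) * Real.log (p N)) atTop (𝓝 L)) :
    Tendsto (fun N : ℕ => -(1 / (N : ℝ)) * Real.log (f N)) atTop (𝓝 L) := by
  have hlower := hlim.sub hg
  rw [sub_zero] at hlower
  have hcoef (N : ℕ) : -(1 / (N : ℝ)) ≤ 0 := neg_nonpos.mpr (by positivity)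
  refine tendsto_of_tendsto_of_tendsto_of_le_of_le hlower hlim (fun N => ?_) (fun N => ?_)
  · have hg_pos : 0 < g N :=
      pos_of_mul_pos_left ((hp N).trans_le ((hpf N).trans (hfg N))) (hp N).le
    have hlog : Real.log (f N) ≤ Real.log (g N) + Real.log (p N) := by
      rw [← Real.log_mul hg_pos.ne' (hp N).ne']
      exact Real.log_le_log ((hp N).trans_le (hpf N)) (hfg N)
    calc -(1 / (N : ℝ)) * Real.log (p N) - Real.log (g N) / N
        = -(1 / (N : ℝ)) * (Real.log (g N) + Real.log (p N)) := by ring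
      _ ≤ -(1 / (N : ℝ)) * Real.log (f N) := mul_le_mul_of_nonpos_left hlog (hcoef N)
  · exact mul_le_mul_of_nonpos_left (Real.log_le_log (hp N) (hpf N)) (hcoef N)

theorem Real.log_choose {m k : ℕ} (h : k ≤ m) :
    Real.log (m.choose k) = Real.log m ! - Real.log k ! - Real.log (m - k)! := by
  rw [Nat.cast_choose ℝ h, Real.log_div (by positivity) (by positivity),
    Real.log_mul (by positivity) (by positivity)]
  ring

theorem hyp2x2_nonneg (a b c d k : ℕ) : 0 ≤ hyp2x2 a b c d k := by
  unfold hyp2x2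
  positivity

theorem hyp2x2_self_pos_s14 (a b c d : ℕ) : 0 < hyp2x2 a b c d a := by
  unfold hyp2x2
  have := Nat.choose_pos (Nat.le_add_right a b)
  have := Nat.choose_pos (show a + c - a ≤ c + d by omega)
  have := Nat.choose_pos (show a + c ≤ a + b + c + d by omega)
  positivity

theorem log_hyp2x2_self (a b c d : ℕ) :
    Real.log (hyp2x2 a b c d a) =
      Real.log (a + b)! + Real.log (c + d)! + Real.log (a + c)! + Real.log (b + d)!
        - Real.log a ! - Real.log b ! - Real.log c ! - Real.log d !
        - Real.log (a + b + c + d)! := by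
  have hrow₁ := Nat.choose_pos (Nat.le_add_right a b)
  have hrow₂ := Nat.choose_pos (Nat.le_add_right c d)
  have htot := Nat.choose_pos (show a + c ≤ a + b + c + d by omega)
  rw [hyp2x2, Nat.add_sub_cancel_left, Real.log_div (by positivity) (by positivity),
    Real.log_mul (by positivity) (by positivity), Real.log_choose (Nat.le_add_right a b),
    Real.log_choose (Nat.le_add_right c d), Real.log_choose (by omega : a + c ≤ a + b + c + d),
    Nat.add_sub_cancel_left, Nat.add_sub_cancel_left, show a + b + c + d - (a + c) = b + d by omega]
  ring

theorem hyp2x2_self_le_fisher2x2 (a b c d : ℕ) : hyp2x2 a b c d a ≤ fisher2x2 a b c d := by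
  unfold fisher2x2
  have hterm := Finset.single_le_sum
    (f := fun k => if hyp2x2 a b c d k ≤ hyp2x2 a b c d a then hyp2x2 a b c d k else 0)
    (fun k _ => by split_ifs; exacts [hyp2x2_nonneg a b c d k, le_rfl])
    (Finset.mem_range.mpr (by omega : a < a + b + c + d + 1))
  simpa only [le_refl, if_true] using hterm

theorem fisher2x2_le_mul_hyp2x2_self (a b c d : ℕ) :
    fisher2x2 a b c d ≤ ((a + b + c + d + 1 : ℕ) : ℝ) * hyp2x2 a b c d a := by
  have hsum := Finset.sum_le_card_nsmul (Finset.range (a + b + c + d + 1))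
    (fun k => if hyp2x2 a b c d k ≤ hyp2x2 a b c d a then hyp2x2 a b c d k else 0)
    (hyp2x2 a b c d a) fun k _ => by
      split_ifs with h
      exacts [h, (hyp2x2_self_pos_s14 a b c d).le]
  rwa [Finset.card_range, nsmul_eq_mul] at hsum

theorem tendsto_neg_inv_mul_log_hyp2x2_self
    (x0 x1 x2 x3 : ℕ → ℕ) (X0 X1 X2 X3 : ℝ)
    (hX0 : 0 < X0) (hX1 : 0 < X1) (hX2 : 0 < X2) (hX3 : 0 < X3)
    (hXsum : X0 + X1 + X2 + X3 = 1)
    (h0 : Tendsto (fun N => (x0 N : ℝ) / N) atTop (𝓝 X0))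
    (h1 : Tendsto (fun N => (x1 N : ℝ) / N) atTop (𝓝 X1))
    (h2 : Tendsto (fun N => (x2 N : ℝ) / N) atTop (𝓝 X2))
    (h3 : Tendsto (fun N => (x3 N : ℝ) / N) atTop (𝓝 X3)) :
    Tendsto (fun N : ℕ => -(1 / (N : ℝ)) * Real.log (hyp2x2 (x0 N) (x1 N) (x2 N) (x3 N) (x0 N)))
      atTop (𝓝 (mi2x2 X0 X1 X2 X3)) := by
  have hrow₁ := tendsto_log_factorial_div_sub (by positivity) (tendsto_natCast_add_div h0 h1)
  have hrow₂ := tendsto_log_factorial_div_sub (by positivity) (tendsto_natCast_add_div h2 h3)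
  have hcol₁ := tendsto_log_factorial_div_sub (by positivity) (tendsto_natCast_add_div h0 h2)
  have hcol₂ := tendsto_log_factorial_div_sub (by positivity) (tendsto_natCast_add_div h1 h3)
  have hcells := (((tendsto_log_factorial_div_sub hX0 h0).add
    (tendsto_log_factorial_div_sub hX1 h1)).add (tendsto_log_factorial_div_sub hX2 h2)).add
    (tendsto_log_factorial_div_sub hX3 h3)
  have htot := tendsto_log_factorial_div_sub one_pos <| hXsum ▸
    tendsto_natCast_add_div (tendsto_natCast_add_div (tendsto_natCast_add_div h0 h1) h2) h3
  have hlim := ((((hrow₁.add hrow₂).add hcol₁).add hcol₂).sub (hcells.add htot)).neg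
  convert hlim using 1
  -- the `log N` terms cancel: rows and columns both add up to the table total
  · funext N
    rw [log_hyp2x2_self]
    push_cast
    ring
  · rw [mi2x2, Real.log_one]
    congr 1
    linear_combination -hXsum

theorem neg_inv_N_log_fisher_tendsto_mi_general
    (x0 x1 x2 x3 : ℕ → ℕ)
    (X0 X1 X2 X3 : ℝ)
    (hX0 : 0 < X0) (hX1 : 0 < X1) (hX2 : 0 < X2) (hX3 : 0 < X3)
    (hXsum : X0 + X1 + X2 + X3 = 1)
    (h0 : Tendsto (fun N => (x0 N : ℝ) / N) atTop (nhds X0))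
    (h1 : Tendsto (fun N => (x1 N : ℝ) / N) atTop (nhds X1))
    (h2 : Tendsto (fun N => (x2 N : ℝ) / N) atTop (nhds X2))
    (h3 : Tendsto (fun N => (x3 N : ℝ) / N) atTop (nhds X3)) :
    Tendsto (fun N : ℕ => -(1 / (N : ℝ)) * Real.log (fisher2x2 (x0 N) (x1 N) (x2 N) (x3 N)))
      atTop (nhds (mi2x2 X0 X1 X2 X3)) := by
  have htotal : Tendsto (fun N => ((x0 N + x1 N + x2 N + x3 N + 1 : ℕ) : ℝ) / N) atTop (𝓝 1) := by
    simpa only [hXsum, add_zero] using tendsto_natCast_add_div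
      (tendsto_natCast_add_div (tendsto_natCast_add_div (tendsto_natCast_add_div h0 h1) h2) h3)
      (by simpa only [Nat.cast_one] using tendsto_one_div_atTop_nhds_zero_nat :
        Tendsto (fun N : ℕ => ((1 : ℕ) : ℝ) / N) atTop (𝓝 0))
  exact tendsto_neg_inv_mul_log_of_le_of_le_mul
    (fun N => hyp2x2_self_pos_s14 _ _ _ _) (fun N => hyp2x2_self_le_fisher2x2 _ _ _ _)
    (fun N => fisher2x2_le_mul_hyp2x2_self _ _ _ _)
    (tendsto_log_div_natCast_of_tendsto_div one_pos htotal)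
    (tendsto_neg_inv_mul_log_hyp2x2_self x0 x1 x2 x3 X0 X1 X2 X3 hX0 hX1 hX2 hX3 hXsum h0 h1 h2 h3)

theorem neg_inv_N_log_fisher_tendsto_mi
    (x0 x1 x2 x3 : ℕ → ℕ)
    (hsum : ∀ᶠ N in atTop, x0 N + x1 N + x2 N + x3 N = N)
    (hpos : ∀ᶠ N in atTop, 0 < x0 N ∧ 0 < x1 N ∧ 0 < x2 N ∧ 0 < x3 N)
    (X0 X1 X2 X3 : ℝ)
    (hX0 : 0 < X0) (hX1 : 0 < X1) (hX2 : 0 < X2) (hX3 : 0 < X3)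
    (hXsum : X0 + X1 + X2 + X3 = 1)
    (hOR : X1 * X2 < X0 * X3)
    (h0 : Tendsto (fun N => (x0 N : ℝ) / N) atTop (nhds X0))
    (h1 : Tendsto (fun N => (x1 N : ℝ) / N) atTop (nhds X1))
    (h2 : Tendsto (fun N => (x2 N : ℝ) / N) atTop (nhds X2))
    (h3 : Tendsto (fun N => (x3 N : ℝ) / N) atTop (nhds X3)) :
    Tendsto (fun N : ℕ => -(1 / (N : ℝ)) * Real.log (fisher2x2 (x0 N) (x1 N) (x2 N) (x3 N)))
      atTop (nhds (mi2x2 X0 X1 X2 X3)) :=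
  neg_inv_N_log_fisher_tendsto_mi_general x0 x1 x2 x3 X0 X1 X2 X3 hX0 hX1 hX2 hX3 hXsum h0 h1 h2 h3
end
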